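/- Define ω₁(x) = (1+x²)^{-(1+2s)/2} for s ∈ (0,1). Then the one-dimensional fractional Laplacian (-Δ)^s ω₁ satisfies |(-Δ)^s ω₁(x)| ≤ C₁ ω₁(x) for all x ∈ ℝ, for some constant C₁ > 0 depending only on s. -/

import Mathlib

open Real MeasureTheory

/-- One-dimensional fractional Laplacian of order `2s`, in its symmetrized form
`(-Δ)^s v (x) = ½ ∫_ℝ (2v(x) - v(x+z) - v(x-z)) / |z|^{1+2s} dz`. -/
noncomputable def fracLap (s : ℝ) (v : ℝ → ℝ) (x : ℝ) : ℝ :=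
  (1/2) * ∫ z : ℝ, (2 * v x - v (x + z) - v (x - z)) / |z| ^ (1 + 2*s)


private lemma aux_deriv1 (e : ℝ) (y : ℝ) :
    HasDerivAt (fun y : ℝ => (1 + y^2) ^ e) (2*y * e * (1 + y^2) ^ (e - 1)) y := by
  have h : HasDerivAt (fun y : ℝ => 1 + y^2) (2*y) y := by
    simpa using (hasDerivAt_pow 2 y).const_add 1
  have := h.rpow_const (p := e) (Or.inl (by positivity))
  simpa using this

private lemma aux_deriv2 (e : ℝ) (y : ℝ) :
    HasDerivAt (fun y : ℝ => 2*y * e * (1 + y^2) ^ (e - 1))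
      (2*e*(1 + y^2)^(e-1) + 2*y*e*(2*y*(e-1)*(1 + y^2)^(e-2))) y := by
  have h1 : HasDerivAt (fun y : ℝ => 2*y*e) (2*e) y := by
    simpa using ((hasDerivAt_id y).const_mul 2).mul_const e
  have h2 : HasDerivAt (fun y : ℝ => (1 + y^2) ^ (e-1)) (2*y*(e-1)*(1 + y^2)^(e-2)) y := by
    have := aux_deriv1 (e-1) y
    convert this using 2
    ring
  exact h1.mul h2

private lemma aux_W2_bound (e : ℝ) (he1 : -(3/2 : ℝ) ≤ e) (he2 : e ≤ -(1/2 : ℝ)) (y : ℝ) :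
    |2*e*(1 + y^2)^(e-1) + 2*y*e*(2*y*(e-1)*(1 + y^2)^(e-2))| ≤ 18 * (1 + y^2) ^ (e - 1) := by
  set A : ℝ := 1 + y^2 with hA
  have hA0 : (0:ℝ) < A := by positivity
  have hA1 : (1:ℝ) ≤ A := by nlinarith [sq_nonneg y]
  have hAe : A ^ (e-1) = A ^ (e-2) * A := by
    rw [show e - 1 = e - 2 + 1 by ring, Real.rpow_add_one hA0.ne']
  have hP : (0:ℝ) ≤ A ^ (e-2) := Real.rpow_nonneg hA0.le _
  have hQ : (0:ℝ) ≤ A ^ (e-1) := Real.rpow_nonneg hA0.le _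
  have h1 : |2*e*A^(e-1)| ≤ 3 * A^(e-1) := by
    rw [abs_mul, abs_of_nonneg hQ]
    have : |2*e| ≤ 3 := by rw [abs_le]; constructor <;> linarith
    nlinarith
  have h2 : |2*y*e*(2*y*(e-1)*A^(e-2))| ≤ 15 * A^(e-1) := by
    have he : |e| ≤ 3/2 := by rw [abs_le]; constructor <;> linarith
    have he' : |e-1| ≤ 5/2 := by rw [abs_le]; constructor <;> linarith
    have hy2 : y^2 ≤ A := by nlinarith
    have habs : |2*y*e*(2*y*(e-1)*A^(e-2))| = 4 * y^2 * (|e| * |e-1|) * A^(e-2) := by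
      rw [abs_mul, abs_mul, abs_mul, abs_mul, abs_of_nonneg hP]
      simp [abs_mul, sq_abs]
      ring_nf
      rw [sq_abs]
      ring
    rw [habs, hAe]
    have hee : |e| * |e-1| ≤ 15/4 := by
      have := mul_le_mul he he' (abs_nonneg _) (by norm_num : (0:ℝ) ≤ 3/2)
      linarith
    have k1 : y ^ 2 * (|e| * |e - 1|) ≤ A * (15/4) :=
      mul_le_mul hy2 hee (by positivity) hA0.le
    nlinarith [mul_le_mul_of_nonneg_right k1 hP]
  calc |2*e*A^(e-1) + 2*y*e*(2*y*(e-1)*A^(e-2))|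
      ≤ |2*e*A^(e-1)| + |2*y*e*(2*y*(e-1)*A^(e-2))| := abs_add_le _ _
    _ ≤ 3 * A^(e-1) + 15 * A^(e-1) := add_le_add h1 h2
    _ = 18 * A^(e-1) := by ring

private lemma aux_compare (e x t : ℝ) (he1 : -(3/2 : ℝ) ≤ e) (he2 : e ≤ -(1/2 : ℝ))
    (ht : t^2 ≤ (1 + x^2)/4) :
    (1 + (x + t)^2) ^ (e - 1) ≤ 32 * (1 + x^2) ^ (e - 1) := by
  have h1 : (1 + x^2)/4 ≤ 1 + (x + t)^2 := by nlinarith [sq_nonneg (x + 2*t)]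
  have hpos : (0:ℝ) < (1 + x^2)/4 := by positivity
  have step1 : (1 + (x + t)^2) ^ (e - 1) ≤ ((1 + x^2)/4) ^ (e - 1) :=
    Real.rpow_le_rpow_of_nonpos hpos h1 (by linarith)
  have step2 : ((1 + x^2)/4) ^ (e - 1) = (1 + x^2) ^ (e - 1) * 4 ^ (1 - e) := by
    rw [Real.div_rpow (by positivity) (by norm_num), div_eq_mul_inv,
      ← Real.rpow_neg (by norm_num : (0:ℝ) ≤ 4)]
    ring_nf
  have h32 : (4:ℝ) ^ (1 - e) ≤ 32 := by
    have h4 : (4:ℝ) ^ (1 - e) ≤ 4 ^ (5/2 : ℝ) :=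
      Real.rpow_le_rpow_of_exponent_le (by norm_num) (by linarith)
    have h5 : (4:ℝ) ^ (5/2 : ℝ) = 32 := by
      rw [show (4:ℝ) = 2 ^ (2:ℝ) by
        rw [show (2:ℝ) = ((2:ℕ):ℝ) by norm_num, Real.rpow_natCast]; norm_num,
        ← Real.rpow_mul (by norm_num)]
      rw [show (2:ℝ) * (5/2) = ((5:ℕ):ℝ) by norm_num, Real.rpow_natCast]
      norm_num
    linarith
  calc (1 + (x + t)^2) ^ (e - 1) ≤ (1 + x^2) ^ (e - 1) * 4 ^ (1 - e) := by
        rw [← step2]; exact step1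
    _ ≤ (1 + x^2) ^ (e - 1) * 32 :=
        mul_le_mul_of_nonneg_left h32 (Real.rpow_nonneg (by positivity) _)
    _ = 32 * (1 + x^2) ^ (e - 1) := by ring

private lemma aux_sq_le_of_mem_uIcc {u t : ℝ} (hu : u ∈ Set.uIcc 0 t) : u^2 ≤ t^2 := by
  rcases le_total (0:ℝ) t with h | h
  · rw [Set.uIcc_of_le h] at hu; nlinarith [hu.1, hu.2]
  · rw [Set.uIcc_of_ge h] at hu; nlinarith [hu.1, hu.2]

private lemma aux_taylor (e x z : ℝ) (he1 : -(3/2 : ℝ) ≤ e) (he2 : e ≤ -(1/2 : ℝ))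
    (hz : z^2 ≤ (1 + x^2)/4) :
    |(1 + (x + z)^2) ^ e - (1 + x^2) ^ e - z * (2*x * e * (1 + x^2) ^ (e - 1))| ≤
      576 * (1 + x^2) ^ (e - 1) * z^2 := by
  set C : ℝ := 576 * (1 + x^2) ^ (e - 1) with hC
  have hC0 : 0 ≤ C := by
    have := Real.rpow_nonneg (by positivity : (0:ℝ) ≤ 1 + x^2) (e - 1)
    positivity
  -- W1 y := 2*y*e*(1+y^2)^(e-1)
  have stepA : ∀ u, u^2 ≤ z^2 →
      |2*(x+u) * e * (1 + (x+u)^2) ^ (e - 1) - 2*x * e * (1 + x^2) ^ (e - 1)| ≤ C * |u| := by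
    intro u hu
    have key := Convex.norm_image_sub_le_of_norm_hasDerivWithin_le
      (f := fun v : ℝ => 2*(x+v) * e * (1 + (x+v)^2) ^ (e - 1))
      (f' := fun v : ℝ => 2*e*(1 + (x+v)^2)^(e-1) + 2*(x+v)*e*(2*(x+v)*(e-1)*(1 + (x+v)^2)^(e-2)))
      (s := Set.uIcc 0 u) (C := C) ?_ ?_ (convex_uIcc _ _)
      (Set.left_mem_uIcc) (Set.right_mem_uIcc)
    · simpa using key
    · intro v _
      have h := (aux_deriv2 e (x + v)).comp v ((hasDerivAt_id v).const_add x)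
      simp only [mul_one] at h
      exact h.hasDerivWithinAt
    · intro v hv
      have hv2 : v^2 ≤ (1 + x^2)/4 := le_trans (le_trans (aux_sq_le_of_mem_uIcc hv) hu) hz
      have b1 := aux_W2_bound e he1 he2 (x + v)
      have b2 := aux_compare e x v he1 he2 hv2
      rw [Real.norm_eq_abs]
      calc |2*e*(1 + (x+v)^2)^(e-1) + 2*(x+v)*e*(2*(x+v)*(e-1)*(1 + (x+v)^2)^(e-2))|
          ≤ 18 * (1 + (x+v)^2) ^ (e - 1) := b1
        _ ≤ 18 * (32 * (1 + x^2) ^ (e - 1)) := by linarith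
        _ = C := by rw [hC]; ring
  -- now the second-order bound
  have key2 := Convex.norm_image_sub_le_of_norm_hasDerivWithin_le
    (f := fun u : ℝ => (1 + (x+u)^2) ^ e - u * (2*x * e * (1 + x^2) ^ (e - 1)))
    (f' := fun u : ℝ => 2*(x+u) * e * (1 + (x+u)^2) ^ (e - 1) - 2*x * e * (1 + x^2) ^ (e - 1))
    (s := Set.uIcc 0 z) (C := C * |z|) ?_ ?_ (convex_uIcc _ _)
    (Set.left_mem_uIcc) (Set.right_mem_uIcc)
  · rw [Real.norm_eq_abs, Real.norm_eq_abs] at key2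
    simp only [zero_mul, sub_zero, add_zero] at key2
    have e1 : |(1 + (x + z)^2) ^ e - (1 + x^2) ^ e - z * (2*x * e * (1 + x^2) ^ (e - 1))|
        = |(1 + (x + z)^2) ^ e - z * (2*x * e * (1 + x^2) ^ (e - 1)) - (1 + x^2) ^ e| := by
      ring_nf
    have e2 : C * |z| * |z| = C * z^2 := by
      rw [mul_assoc, ← abs_mul, ← sq, abs_of_nonneg (sq_nonneg z)]
    rw [e1, hC] at *
    calc |(1 + (x + z) ^ 2) ^ e - z * (2 * x * e * (1 + x ^ 2) ^ (e - 1)) - (1 + x ^ 2) ^ e|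
        ≤ 576 * (1 + x^2) ^ (e - 1) * |z| * |z| := key2
      _ = 576 * (1 + x^2) ^ (e - 1) * z^2 := by
          rw [mul_assoc, ← abs_mul, ← sq, abs_of_nonneg (sq_nonneg z)]
  · intro u _
    have h := (aux_deriv1 e (x + u)).comp u ((hasDerivAt_id u).const_add x)
    simp only [mul_one] at h
    exact (h.sub (hasDerivAt_mul_const _)).hasDerivWithinAt
  · intro u hu
    rw [Real.norm_eq_abs]
    have hu2 : u^2 ≤ z^2 := aux_sq_le_of_mem_uIcc hu
    have hA := stepA u hu2
    have habs : |u| ≤ |z| := by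
      nlinarith [sq_abs u, sq_abs z, abs_nonneg u, abs_nonneg z, mul_self_nonneg (|u| - |z|)]
    exact le_trans hA (mul_le_mul_of_nonneg_left habs hC0)

private lemma aux_num (e x z : ℝ) (he1 : -(3/2 : ℝ) ≤ e) (he2 : e ≤ -(1/2 : ℝ))
    (hz : z^2 ≤ (1 + x^2)/4) :
    |2 * (1 + x^2) ^ e - (1 + (x + z)^2) ^ e - (1 + (x - z)^2) ^ e| ≤
      1152 * (1 + x^2) ^ (e - 1) * z^2 := by
  have h1 := aux_taylor e x z he1 he2 hz
  have h2 := aux_taylor e x (-z) he1 he2 (by rw [neg_pow]; simpa using hz)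
  rw [show x + -z = x - z by ring] at h2
  rw [show (-z)^2 = z^2 by ring] at h2
  have key : 2 * (1 + x^2) ^ e - (1 + (x + z)^2) ^ e - (1 + (x - z)^2) ^ e =
      -(((1 + (x + z)^2) ^ e - (1 + x^2) ^ e - z * (2*x * e * (1 + x^2) ^ (e - 1))) +
        ((1 + (x - z)^2) ^ e - (1 + x^2) ^ e - (-z) * (2*x * e * (1 + x^2) ^ (e - 1)))) := by
    ring
  rw [key, abs_neg]
  calc |_ + _| ≤ _ + _ := abs_add_le _ _
    _ ≤ 576 * (1 + x^2) ^ (e - 1) * z^2 + 576 * (1 + x^2) ^ (e - 1) * z^2 := add_le_add h1 h2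
    _ = 1152 * (1 + x^2) ^ (e - 1) * z^2 := by ring

set_option maxHeartbeats 1000000 in
/-- `|(-Δ)^s ω₁(x)| ≤ C₁ ω₁(x)` for the barrier `ω₁(x) = (1+x²)^{-(1+2s)/2}`. -/
theorem stmt_6 (s : ℝ) (hs0 : 0 < s) (hs1 : s < 1) :
    ∃ C₁ > (0:ℝ), ∀ x : ℝ,
      |fracLap s (fun y : ℝ => (1 + y^2) ^ (-(1 + 2*s)/2)) x| ≤
        C₁ * (1 + x^2) ^ (-(1 + 2*s)/2) := by
  set e : ℝ := -(1 + 2*s)/2 with he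
  have he1 : -(3/2 : ℝ) ≤ e := by rw [he]; linarith
  have he2 : e ≤ -(1/2 : ℝ) := by rw [he]; linarith
  have hWI : Integrable (fun y : ℝ => (1 + y^2) ^ e) := by
    have h := integrable_rpow_neg_one_add_norm_sq (E := ℝ) (μ := volume) (r := 1 + 2*s)
      (by rw [Module.finrank_self]; push_cast; linarith)
    simpa [Real.norm_eq_abs, sq_abs, he] using h
  set I : ℝ := ∫ y : ℝ, (1 + y^2) ^ e with hI
  have hI0 : 0 ≤ I := by
    rw [hI]; exact integral_nonneg fun y => Real.rpow_nonneg (by positivity) _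
  have h2s : (0:ℝ) < 2 - 2*s := by linarith
  refine ⟨1152/(2-2*s) + 4/s + 16*I + 1, ?_, ?_⟩
  · have d1 : (0:ℝ) < 1152/(2-2*s) := by positivity
    have d2 : (0:ℝ) < 4/s := by positivity
    linarith
  intro x
  have hA0 : (0:ℝ) < 1 + x^2 := by positivity
  have hX0 : (0:ℝ) ≤ (1 + x^2) ^ e := Real.rpow_nonneg hA0.le _
  set r : ℝ := Real.sqrt (1 + x^2) / 2 with hrdef
  have hr0 : 0 < r := by rw [hrdef]; positivity
  have hrsq : r^2 = (1 + x^2)/4 := by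
    rw [hrdef, div_pow, Real.sq_sqrt hA0.le]; norm_num
  have hrhalf : 1/2 ≤ r := by
    have h1 : (1:ℝ) ≤ Real.sqrt (1 + x^2) := by
      have := Real.sqrt_le_sqrt (show (1:ℝ) ≤ 1 + x^2 by nlinarith)
      simpa using this
    rw [hrdef]; linarith
  -- bound (a): r ^ (-(1+2s)) ≤ 8 * (1+x²)^e
  have hb : r ^ (-(1 + 2*s)) ≤ 8 * (1 + x^2) ^ e := by
    have h1 : r ^ (-(1 + 2*s)) = (1 + x^2) ^ e * 2 ^ (1 + 2*s) := by
      rw [hrdef, Real.div_rpow (Real.sqrt_nonneg _) (by norm_num), Real.sqrt_eq_rpow,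
        ← Real.rpow_mul hA0.le, show 1/2 * -(1 + 2*s) = e by rw [he]; ring,
        div_eq_mul_inv, ← Real.rpow_neg (by norm_num : (0:ℝ) ≤ 2), neg_neg]
    rw [h1]
    have h2 : (2:ℝ) ^ (1 + 2*s) ≤ 8 := by
      have h3 := Real.rpow_le_rpow_of_exponent_le (by norm_num : (1:ℝ) ≤ 2)
        (show 1 + 2*s ≤ ((3:ℕ):ℝ) by push_cast; linarith)
      rw [Real.rpow_natCast] at h3
      norm_num at h3
      exact h3
    nlinarith
  -- bound (b): r ^ (-(2s)) ≤ 4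
  have hc : r ^ (-(2*s)) ≤ 4 := by
    have h1 : r ^ (-(2*s)) ≤ ((1:ℝ)/2) ^ (-(2*s)) :=
      Real.rpow_le_rpow_of_nonpos (by norm_num) hrhalf (by linarith)
    have h2 : ((1:ℝ)/2) ^ (-(2*s)) = 2 ^ (2*s) := by
      rw [one_div, Real.inv_rpow (by norm_num : (0:ℝ) ≤ 2), ← Real.rpow_neg
        (by norm_num : (0:ℝ) ≤ 2)]
      norm_num
    have h3 : (2:ℝ) ^ (2*s) ≤ 4 := by
      have h4 := Real.rpow_le_rpow_of_exponent_le (by norm_num : (1:ℝ) ≤ 2)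
        (show 2*s ≤ ((2:ℕ):ℝ) by push_cast; linarith)
      rw [Real.rpow_natCast] at h4
      norm_num at h4
      exact h4
    linarith
  -- bound (c): r ^ (2-2s) ≤ 1+x²
  have hd : r ^ (2 - 2*s) ≤ 1 + x^2 := by
    rcases le_total r 1 with h | h
    · have h1 := Real.rpow_le_one hr0.le h (by linarith : (0:ℝ) ≤ 2 - 2*s)
      nlinarith
    · have h1 : r ^ (2 - 2*s) ≤ r ^ ((2:ℕ):ℝ) :=
        Real.rpow_le_rpow_of_exponent_le h (by push_cast; linarith)
      rw [Real.rpow_natCast] at h1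
      rw [hrsq] at h1
      linarith
  set F : ℝ → ℝ :=
    fun t => (2 * (1 + x^2) ^ e - (1 + (x + t)^2) ^ e - (1 + (x - t)^2) ^ e) / t ^ (1 + 2*s)
    with hF
  have heven : (fun z : ℝ =>
      (2 * (1 + x^2) ^ e - (1 + (x + z)^2) ^ e - (1 + (x - z)^2) ^ e) / |z| ^ (1 + 2*s)) =
      fun z => F |z| := by
    funext z
    simp only [hF]
    rcases abs_cases z with ⟨h, _⟩ | ⟨h, _⟩
    · rw [h]
    · rw [h, show x + -z = x - z by ring, show x - -z = x + z by ring]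
      ring_nf
  set K : ℝ := 1152 * (1 + x^2) ^ (e - 1) with hK
  have hK0 : 0 ≤ K := by
    have := Real.rpow_nonneg hA0.le (e - 1); rw [hK]; positivity
  set g1 : ℝ → ℝ := fun t => K * t ^ (1 - 2*s) with hg1
  set g2 : ℝ → ℝ := fun t => 2 * (1 + x^2) ^ e * t ^ (-(1 + 2*s)) +
    r ^ (-(1 + 2*s)) * ((1 + (x + t)^2) ^ e + (1 + (x - t)^2) ^ e) with hg2
  clear_value e I r F K g1 g2
  have hint1 : IntegrableOn g1 (Set.Ioc 0 r) := by
    have h := intervalIntegral.intervalIntegrable_rpow'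
      (a := 0) (b := r) (show (-1:ℝ) < 1 - 2*s by linarith)
    rw [intervalIntegrable_iff_integrableOn_Ioc_of_le hr0.le] at h
    simp only [hg1]
    exact h.const_mul K
  have hWp : Integrable (fun t : ℝ => (1 + (x + t)^2) ^ e) := by
    simpa using hWI.comp_add_left x
  have hWm : Integrable (fun t : ℝ => (1 + (x - t)^2) ^ e) := by
    simpa using hWI.comp_sub_left x
  have hIoiInt : IntegrableOn (fun t : ℝ => t ^ (-(1 + 2*s))) (Set.Ioi r) :=
    integrableOn_Ioi_rpow_of_lt (show -(1 + 2*s) < -1 by linarith) hr0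
  have hsum : Integrable (fun t : ℝ => (1 + (x + t)^2) ^ e + (1 + (x - t)^2) ^ e) :=
    hWp.add hWm
  have hint2 : IntegrableOn g2 (Set.Ioi r) := by
    simp only [hg2]
    apply Integrable.add
    · exact hIoiInt.const_mul _
    · exact (hsum.integrableOn).const_mul _

  have hind1 : Integrable ((Set.Ioc (0:ℝ) r).indicator g1) :=
    (integrable_indicator_iff measurableSet_Ioc).mpr hint1
  have hind2 : Integrable ((Set.Ioi r).indicator g2) :=
    (integrable_indicator_iff measurableSet_Ioi).mpr hint2
  -- pointwise bound
  have hbound : ∀ᵐ t ∂(volume.restrict (Set.Ioi (0:ℝ))),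
      |F t| ≤ (Set.Ioc (0:ℝ) r).indicator g1 t + (Set.Ioi r).indicator g2 t := by
    filter_upwards [ae_restrict_mem measurableSet_Ioi] with t ht
    have ht0 : 0 < t := ht
    have htpow : 0 < t ^ (1 + 2*s) := Real.rpow_pos_of_pos ht0 _
    have hPnn : (0:ℝ) ≤ (1 + (x + t)^2) ^ e := Real.rpow_nonneg (by positivity) _
    have hQnn : (0:ℝ) ≤ (1 + (x - t)^2) ^ e := Real.rpow_nonneg (by positivity) _
    have hFabs : |F t| = |2 * (1 + x^2) ^ e - (1 + (x + t)^2) ^ e - (1 + (x - t)^2) ^ e| /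
        t ^ (1 + 2*s) := by
      simp only [hF]
      rw [abs_div, abs_of_pos htpow]
    rcases le_or_gt t r with hle | hlt
    · rw [Set.indicator_of_mem (Set.mem_Ioc.mpr ⟨ht0, hle⟩) g1,
        Set.indicator_of_notMem (by simpa using hle) g2, add_zero]
      have hz : t^2 ≤ (1 + x^2)/4 := by nlinarith
      have hnum := aux_num e x t he1 he2 hz
      rw [hFabs]
      have hdiv : t ^ ((2:ℕ):ℝ) / t ^ (1 + 2*s) = t ^ (1 - 2*s) := by
        rw [← Real.rpow_sub ht0]
        congr 1
        push_cast
        ring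
      calc |2 * (1 + x^2) ^ e - (1 + (x + t)^2) ^ e - (1 + (x - t)^2) ^ e| / t ^ (1 + 2*s)
          ≤ K * t^2 / t ^ (1 + 2*s) := by
            rw [hK]; gcongr
        _ = K * (t ^ ((2:ℕ):ℝ) / t ^ (1 + 2*s)) := by
            rw [Real.rpow_natCast]; ring
        _ = K * t ^ (1 - 2*s) := by rw [hdiv]
        _ = g1 t := by simp only [hg1]
    · rw [Set.indicator_of_notMem (by simp [hlt.not_ge]) g1,
        Set.indicator_of_mem (Set.mem_Ioi.mpr hlt) g2, zero_add]
      rw [hFabs]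
      have hnum : |2 * (1 + x^2) ^ e - (1 + (x + t)^2) ^ e - (1 + (x - t)^2) ^ e| ≤
          2 * (1 + x^2) ^ e + ((1 + (x + t)^2) ^ e + (1 + (x - t)^2) ^ e) := by
        rw [abs_le]; constructor <;> linarith
      have hrt : t ^ (-(1 + 2*s)) ≤ r ^ (-(1 + 2*s)) :=
        Real.rpow_le_rpow_of_nonpos hr0 hlt.le (by linarith)
      simp only [hg2]
      have hPQ : (0:ℝ) ≤ (1 + (x + t)^2) ^ e + (1 + (x - t)^2) ^ e := by linarith
      have e1 : |2 * (1 + x^2) ^ e - (1 + (x + t)^2) ^ e - (1 + (x - t)^2) ^ e| / t ^ (1 + 2*s) ≤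
          (2 * (1 + x^2) ^ e + ((1 + (x + t)^2) ^ e + (1 + (x - t)^2) ^ e)) / t ^ (1 + 2*s) :=
        (div_le_div_iff_of_pos_right htpow).mpr hnum
      have e2 : (2 * (1 + x^2) ^ e + ((1 + (x + t)^2) ^ e + (1 + (x - t)^2) ^ e)) / t ^ (1 + 2*s)
          = 2 * (1 + x^2) ^ e * t ^ (-(1 + 2*s)) +
            ((1 + (x + t)^2) ^ e + (1 + (x - t)^2) ^ e) * t ^ (-(1 + 2*s)) := by
        rw [Real.rpow_neg ht0.le]
        ring
      have e3 : ((1 + (x + t)^2) ^ e + (1 + (x - t)^2) ^ e) * t ^ (-(1 + 2*s)) ≤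
          ((1 + (x + t)^2) ^ e + (1 + (x - t)^2) ^ e) * r ^ (-(1 + 2*s)) :=
        mul_le_mul_of_nonneg_left hrt hPQ
      rw [e2] at e1
      refine e1.trans ?_
      rw [mul_comm (r ^ (-(1 + 2*s)))]
      exact add_le_add_right e3 _
  -- integral of the dominating function
  have hval : (∫ t in Set.Ioi (0:ℝ),
        ((Set.Ioc (0:ℝ) r).indicator g1 t + (Set.Ioi r).indicator g2 t)) =
      (∫ t in Set.Ioc (0:ℝ) r, g1 t) + ∫ t in Set.Ioi r, g2 t := by
    rw [integral_add hind1.restrict hind2.restrict]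
    congr 1
    · rw [integral_indicator measurableSet_Ioc, Measure.restrict_restrict measurableSet_Ioc,
        Set.inter_eq_self_of_subset_left Set.Ioc_subset_Ioi_self]
    · rw [integral_indicator measurableSet_Ioi, Measure.restrict_restrict measurableSet_Ioi,
        Set.inter_eq_self_of_subset_left (Set.Ioi_subset_Ioi hr0.le)]
  have hsmallval : (∫ t in Set.Ioc (0:ℝ) r, g1 t) = K * (r ^ (2 - 2*s) / (2 - 2*s)) := by
    simp only [hg1]
    rw [← intervalIntegral.integral_of_le hr0.le, intervalIntegral.integral_const_mul,
      integral_rpow (Or.inl (show (-1:ℝ) < 1 - 2*s by linarith)),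
      Real.zero_rpow (ne_of_gt (by linarith : (0:ℝ) < 1 - 2*s + 1)),
      show 1 - 2*s + 1 = 2 - 2*s by ring, sub_zero]
  have hsmall : (∫ t in Set.Ioc (0:ℝ) r, g1 t) ≤ 1152/(2 - 2*s) * (1 + x^2) ^ e := by
    rw [hsmallval, hK]
    have hAe : (1 + x^2) ^ (e - 1) * (1 + x^2) = (1 + x^2) ^ e := by
      rw [show e = e - 1 + 1 by ring, Real.rpow_add_one hA0.ne']
      ring_nf
    have hAe1 : (0:ℝ) ≤ (1 + x^2) ^ (e - 1) := Real.rpow_nonneg hA0.le _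
    calc 1152 * (1 + x^2) ^ (e - 1) * (r ^ (2 - 2*s) / (2 - 2*s))
        ≤ 1152 * (1 + x^2) ^ (e - 1) * ((1 + x^2) / (2 - 2*s)) := by gcongr
      _ = 1152/(2 - 2*s) * ((1 + x^2) ^ (e - 1) * (1 + x^2)) := by ring
      _ = 1152/(2 - 2*s) * (1 + x^2) ^ e := by rw [hAe]
  have hIoi_val : (∫ t in Set.Ioi r, t ^ (-(1 + 2*s))) = r ^ (-(2*s)) / (2*s) := by
    rw [integral_Ioi_rpow_of_lt (show -(1 + 2*s) < -1 by linarith) hr0,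
      show -(1 + 2*s) + 1 = -(2*s) by ring, neg_div_neg_eq]
  have hSnn : (0:ℝ) ≤ ∫ t in Set.Ioi r, ((1 + (x + t)^2) ^ e + (1 + (x - t)^2) ^ e) :=
    setIntegral_nonneg measurableSet_Ioi fun t _ => by positivity
  have hSle : (∫ t in Set.Ioi r, ((1 + (x + t)^2) ^ e + (1 + (x - t)^2) ^ e)) ≤ 2*I := by
    have h1 := setIntegral_le_integral (s := Set.Ioi r)
      (f := fun t : ℝ => (1 + (x + t)^2) ^ e + (1 + (x - t)^2) ^ e) hsum
      (Filter.Eventually.of_forall fun t => by positivity)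
    have h2 : (∫ t : ℝ, ((1 + (x + t)^2) ^ e + (1 + (x - t)^2) ^ e)) = I + I := by
      rw [integral_add hWp hWm, hI]
      congr 1
      · exact integral_add_left_eq_self (μ := volume) (fun y : ℝ => (1 + y^2) ^ e) x
      · exact integral_sub_left_eq_self (fun y : ℝ => (1 + y^2) ^ e) volume x
    rw [h2] at h1
    linarith
  have htailval : (∫ t in Set.Ioi r, g2 t) =
      2 * (1 + x^2) ^ e * (∫ t in Set.Ioi r, t ^ (-(1 + 2*s))) +
      r ^ (-(1 + 2*s)) * ∫ t in Set.Ioi r, ((1 + (x + t)^2) ^ e + (1 + (x - t)^2) ^ e) := by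
    simp only [hg2]
    rw [integral_add (hIoiInt.const_mul _) ((hsum.integrableOn).const_mul _),
      integral_const_mul, integral_const_mul]
  have htail : (∫ t in Set.Ioi r, g2 t) ≤ 4/s * (1 + x^2) ^ e + 16*I * (1 + x^2) ^ e := by
    rw [htailval, hIoi_val]
    have ht1 : 2 * (1 + x^2) ^ e * (r ^ (-(2*s)) / (2*s)) ≤ 4/s * (1 + x^2) ^ e := by
      have h5 : r ^ (-(2*s)) / (2*s) ≤ 4 / (2*s) := by gcongr
      calc 2 * (1 + x^2) ^ e * (r ^ (-(2*s)) / (2*s)) ≤ 2 * (1 + x^2) ^ e * (4 / (2*s)) := by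
            gcongr
        _ = 4/s * (1 + x^2) ^ e := by field_simp
    have ht2 : r ^ (-(1 + 2*s)) * (∫ t in Set.Ioi r, ((1 + (x + t)^2) ^ e + (1 + (x - t)^2) ^ e))
        ≤ 16*I * (1 + x^2) ^ e := by
      have h6 := mul_le_mul hb hSle hSnn (by positivity : (0:ℝ) ≤ 8 * (1 + x^2) ^ e)
      nlinarith
    linarith
  -- assemble
  have hgoal : |fracLap s (fun y : ℝ => (1 + y^2) ^ e) x| = |∫ t in Set.Ioi (0:ℝ), F t| := by
    show |(1/2) * ∫ z : ℝ, (2 * (1 + x^2) ^ e - (1 + (x + z)^2) ^ e - (1 + (x - z)^2) ^ e) / |z| ^ (1 + 2*s)| = _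
    rw [heven, integral_comp_abs (f := F)]
    rw [show (1:ℝ)/2 * (2 * ∫ t in Set.Ioi (0:ℝ), F t) = ∫ t in Set.Ioi (0:ℝ), F t by ring]
  rw [hgoal]
  have habs : |∫ t in Set.Ioi (0:ℝ), F t| ≤ ∫ t in Set.Ioi (0:ℝ), |F t| := by
    simpa [Real.norm_eq_abs] using
      norm_integral_le_integral_norm (μ := volume.restrict (Set.Ioi (0:ℝ))) F
  have hmono := integral_mono_of_nonneg (μ := volume.restrict (Set.Ioi (0:ℝ)))
    (Filter.Eventually.of_forall fun t => abs_nonneg (F t)) (hind1.add hind2).restrict hbound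
  calc |∫ t in Set.Ioi (0:ℝ), F t| ≤ ∫ t in Set.Ioi (0:ℝ), |F t| := habs
    _ ≤ ∫ t in Set.Ioi (0:ℝ),
        ((Set.Ioc (0:ℝ) r).indicator g1 t + (Set.Ioi r).indicator g2 t) := hmono
    _ = (∫ t in Set.Ioc (0:ℝ) r, g1 t) + ∫ t in Set.Ioi r, g2 t := hval
    _ ≤ 1152/(2 - 2*s) * (1 + x^2) ^ e + (4/s * (1 + x^2) ^ e + 16*I * (1 + x^2) ^ e) := by
        linarith
    _ ≤ (1152/(2 - 2*s) + 4/s + 16*I + 1) * (1 + x^2) ^ e := by nlinarith
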